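/- Let $(A, \mathfrak{m}, k)$ be a noetherian local ring and $(F^\bullet, d^\bullet)$ a cochain complex of free $A$-modules of finite rank. Suppose $H^p(F^\bullet \otimes_A k) = 0$. Then $H^p(F^\bullet) = 0$ and the base change map $\varphi^{p-1} \colon H^{p-1}(F^\bullet) \otimes_A k \to H^{p-1}(F^\bullet \otimes_A k)$ is surjective. -/

import Mathlib

open TensorProduct IsLocalRing

open TensorProduct

section Defs

variable (A : Type*) [CommRing A] (k : Type*) [CommRing k] [Algebra A k]
variable {M0 M1 M2 : Type*} [AddCommGroup M0] [AddCommGroup M1] [AddCommGroup M2]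
  [Module A M0] [Module A M1] [Module A M2]

/-- Cohomology of `M0 → M1 → M2` at the middle spot. -/
abbrev coh (d0 : M0 →ₗ[A] M1) (d1 : M1 →ₗ[A] M2) : Type _ :=
  LinearMap.ker d1 ⧸ (LinearMap.range d0).comap (LinearMap.ker d1).subtype

variable (d0 : M0 →ₗ[A] M1) (d1 : M1 →ₗ[A] M2)

/-- The map on kernels induced by `x ↦ 1 ⊗ x`. -/
noncomputable def kerBaseChange : LinearMap.ker d1 →ₗ[A] LinearMap.ker (d1.baseChange k) :=
  LinearMap.codRestrict ((LinearMap.ker (d1.baseChange k)).restrictScalars A)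
    (((TensorProduct.mk A k M1) 1).comp (LinearMap.ker d1).subtype)
    (fun x => by
      simp [LinearMap.mem_ker, (LinearMap.mem_ker.mp x.2)])

/-- The natural base change map `k ⊗ H(F) → H(F ⊗ k)` on cohomology. -/
noncomputable def cohBaseChange :
    k ⊗[A] coh A d0 d1 →ₗ[k] coh k (d0.baseChange k) (d1.baseChange k) :=
  LinearMap.liftBaseChange k <|
    Submodule.liftQ _
      (((Submodule.mkQ _).restrictScalars A).comp (kerBaseChange A k d1))
      (by
        rintro ⟨x, hx⟩ ⟨y, rfl⟩
        have : kerBaseChange A k d1 ⟨d0 y, hx⟩ ∈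
            (LinearMap.range (d0.baseChange k)).comap
              (LinearMap.ker (d1.baseChange k)).subtype := by
          refine ⟨1 ⊗ₜ y, ?_⟩
          rfl
        simpa [LinearMap.mem_ker, Submodule.Quotient.mk_eq_zero] using this)

end Defs

/-!
Write `R = im d1` and let `f : F2 ⧸ R → F3` be induced by `d2`. As `k ⊗ -` is right exact,
`k ⊗ (F2 ⧸ R)` is the cokernel of `d1 ⊗ k`, so the vanishing of `H(F ⊗ k)` at `F2` makes `f ⊗ k`
injective. Over a local ring, a map from a finite module to a finite free one which is injective
modulo the maximal ideal is split injective. Hence `f` is injective, which is `H(F) = 0` at `F2`, and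
`F2 ⧸ R` is projective. Then `R` is a direct summand of `F2`, so `R ⊗ k → F2 ⊗ k` stays injective,
and right exactness applied to `0 → ker d1 → F1 → R → 0` shows that `ker (d1 ⊗ k)` is the image of
`k ⊗ ker d1`: this is the surjectivity of the base change map on `H(F)` at `F1`.
-/

section

variable {A : Type*} [CommRing A] {k : Type*} [CommRing k] [Algebra A k]
  {M0 M1 M2 M3 : Type*} [AddCommGroup M0] [AddCommGroup M1] [AddCommGroup M2] [AddCommGroup M3]
  [Module A M0] [Module A M1] [Module A M2] [Module A M3]

theorem subsingleton_coh_iff (d0 : M0 →ₗ[A] M1) (d1 : M1 →ₗ[A] M2) :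
    Subsingleton (coh A d0 d1) ↔ LinearMap.ker d1 ≤ LinearMap.range d0 := by
  rw [Submodule.Quotient.subsingleton_iff, Submodule.comap_subtype_eq_top]

theorem cohBaseChange_comp_baseChange_mkQ (d0 : M0 →ₗ[A] M1) (d1 : M1 →ₗ[A] M2) :
    cohBaseChange A k d0 d1 ∘ₗ (Submodule.mkQ _).baseChange k =
      Submodule.mkQ _ ∘ₗ (kerBaseChange A k d1).liftBaseChange k := by
  ext x
  simp [cohBaseChange]

theorem subtype_comp_liftBaseChange_kerBaseChange (d1 : M1 →ₗ[A] M2) :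
    (LinearMap.ker (d1.baseChange k)).subtype ∘ₗ (kerBaseChange A k d1).liftBaseChange k =
      (LinearMap.ker d1).subtype.baseChange k := by
  ext x
  simp only [AlgebraTensorModule.curry_apply, LinearMap.restrictScalars_comp, curry_apply,
    LinearMap.coe_comp, LinearMap.coe_restrictScalars, Submodule.coe_subtype, Function.comp_apply,
    LinearMap.liftBaseChange_tmul, one_smul, LinearMap.baseChange_tmul, Submodule.subtype_apply]
  rfl

theorem cohBaseChange_surjective (d0 : M0 →ₗ[A] M1) (d1 : M1 →ₗ[A] M2)
    (h : LinearMap.ker (d1.baseChange k) ≤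
      LinearMap.range ((LinearMap.ker d1).subtype.baseChange k)) :
    Function.Surjective (cohBaseChange A k d0 d1) := by
  have hker : Function.Surjective ((kerBaseChange A k d1).liftBaseChange k) := by
    rintro ⟨z, hz⟩
    obtain ⟨w, rfl⟩ := h hz
    exact ⟨w, Subtype.ext (LinearMap.congr_fun (subtype_comp_liftBaseChange_kerBaseChange d1) w)⟩
  refine Function.Surjective.of_comp (g := (Submodule.mkQ _).baseChange k) ?_
  rw [← LinearMap.coe_comp, cohBaseChange_comp_baseChange_mkQ, LinearMap.coe_comp]
  exact (Submodule.mkQ_surjective _).comp hker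

theorem injective_baseChange_liftQ_range (d1 : M1 →ₗ[A] M2) (d2 : M2 →ₗ[A] M3)
    (hd : LinearMap.range d1 ≤ LinearMap.ker d2)
    (hk : LinearMap.ker (d2.baseChange k) ≤ LinearMap.range (d1.baseChange k)) :
    Function.Injective (((LinearMap.range d1).liftQ d2 hd).baseChange k) := by
  rw [injective_iff_map_eq_zero]
  intro w hw
  have hsurj : Function.Surjective ((LinearMap.range d1).mkQ.baseChange k) :=
    LinearMap.lTensor_surjective k (LinearMap.range d1).mkQ_surjective
  obtain ⟨v, rfl⟩ := hsurj w
  obtain ⟨u, rfl⟩ : v ∈ LinearMap.range (d1.baseChange k) := by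
    refine hk ?_
    rwa [LinearMap.mem_ker, ← Submodule.liftQ_mkQ _ d2 hd, LinearMap.baseChange_comp]
  rw [← LinearMap.comp_apply, ← LinearMap.baseChange_comp, LinearMap.range_mkQ_comp,
    LinearMap.baseChange_zero, LinearMap.zero_apply]

theorem Submodule.exists_leftInverse_subtype_of_projective (p : Submodule A M1)
    [Module.Projective A (M1 ⧸ p)] : ∃ r : M1 →ₗ[A] p, r ∘ₗ p.subtype = LinearMap.id :=
  ((Function.Exact.split_tfae (LinearMap.exact_subtype_mkQ p) Subtype.val_injective
    p.mkQ_surjective).out 0 1).mp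
    (Module.projective_lifting_property _ _ p.mkQ_surjective)

theorem ker_baseChange_le_range_of_projective (d : M1 →ₗ[A] M2)
    [Module.Projective A (M2 ⧸ LinearMap.range d)] :
    LinearMap.ker (d.baseChange k) ≤
      LinearMap.range ((LinearMap.ker d).subtype.baseChange k) := by
  obtain ⟨r, hr⟩ := (LinearMap.range d).exists_leftInverse_subtype_of_projective
  have hinj : Function.Injective ((LinearMap.range d).subtype.baseChange k) := by
    refine Function.HasLeftInverse.injective ⟨r.baseChange k, fun x => ?_⟩
    rw [← LinearMap.comp_apply, ← LinearMap.baseChange_comp, hr, LinearMap.baseChange_id,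
      LinearMap.id_apply]
  have hexact : Function.Exact (LinearMap.ker d).subtype d.rangeRestrict := by
    rw [LinearMap.exact_iff, LinearMap.ker_rangeRestrict, Submodule.range_subtype]
  intro x hx
  refine (lTensor_exact k hexact d.surjective_rangeRestrict x).mp (hinj ?_)
  change ((LinearMap.range d).subtype.baseChange k ∘ₗ d.rangeRestrict.baseChange k) x = 0
  rw [← LinearMap.baseChange_comp]
  exact hx

end

theorem stmt16_general {A : Type*} [CommRing A] [IsLocalRing A]
    {F0 : Type*} [AddCommGroup F0] [Module A F0]
    {F1 : Type*} [AddCommGroup F1] [Module A F1]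
    {F2 : Type*} [AddCommGroup F2] [Module A F2] [Module.Finite A F2]
    {F3 : Type*} [AddCommGroup F3] [Module A F3] [Module.Free A F3] [Module.Finite A F3]
    (d0 : F0 →ₗ[A] F1) (d1 : F1 →ₗ[A] F2) (d2 : F2 →ₗ[A] F3)
    (hc12 : d2 ∘ₗ d1 = 0)
    (hvanish : Subsingleton
      (coh (ResidueField A) (d1.baseChange (ResidueField A))
        (d2.baseChange (ResidueField A)))) :
    Subsingleton (coh A d1 d2) ∧
    Function.Surjective (cohBaseChange A (ResidueField A) d0 d1) := by
  have hd : LinearMap.range d1 ≤ LinearMap.ker d2 := LinearMap.range_le_ker_iff.mpr hc12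
  set f := (LinearMap.range d1).liftQ d2 hd
  have hfk : Function.Injective (f.baseChange (ResidueField A)) :=
    injective_baseChange_liftQ_range d1 d2 hd ((subsingleton_coh_iff _ _).mp hvanish)
  obtain ⟨g, hg⟩ := (IsLocalRing.split_injective_iff_lTensor_residueField_injective f).mpr hfk
  have : Module.Projective A (F2 ⧸ LinearMap.range d1) := .of_split f g hg
  refine ⟨(subsingleton_coh_iff d1 d2).mpr fun x hx => ?_,
    cohBaseChange_surjective d0 d1 (ker_baseChange_le_range_of_projective d1)⟩
  have hf : Function.Injective f := Function.HasLeftInverse.injective ⟨g, LinearMap.congr_fun hg⟩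
  exact (Submodule.Quotient.mk_eq_zero _).mp (hf (by simpa [f] using hx))

theorem stmt16 {A : Type*} [CommRing A] [IsLocalRing A] [IsNoetherianRing A]
    {F0 : Type*} [AddCommGroup F0] [Module A F0] [Module.Free A F0] [Module.Finite A F0]
    {F1 : Type*} [AddCommGroup F1] [Module A F1] [Module.Free A F1] [Module.Finite A F1]
    {F2 : Type*} [AddCommGroup F2] [Module A F2] [Module.Free A F2] [Module.Finite A F2]
    {F3 : Type*} [AddCommGroup F3] [Module A F3] [Module.Free A F3] [Module.Finite A F3]
    (d0 : F0 →ₗ[A] F1) (d1 : F1 →ₗ[A] F2) (d2 : F2 →ₗ[A] F3)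
    (hc01 : d1 ∘ₗ d0 = 0) (hc12 : d2 ∘ₗ d1 = 0)
    (hvanish : Subsingleton
      (coh (ResidueField A) (d1.baseChange (ResidueField A))
        (d2.baseChange (ResidueField A)))) :
    Subsingleton (coh A d1 d2) ∧
    Function.Surjective (cohBaseChange A (ResidueField A) d0 d1) :=
  stmt16_general d0 d1 d2 hc12 hvanish
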